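/- Let σ be a finite type of variables. In the ring of formal power series in t over MvPolynomial σ ℚ, one has Σ_{k≥0} h_k t^k = exp( Σ_{k≥1} (1/k) • p_k t^k ), where exp of a power series with zero constant term is defined by exp(g) = Σ_{n≥0} g^n/n! (each coefficient being a finite sum). -/

import Mathlib

/-
Both sides solve the linear differential equation `F' = P F` with `F(0) = 1`, where
`P = Σ_{k≥0} p_{k+1} t^k` is the derivative of `g = Σ_{k≥1} p_k t^k / k`. For `exp g` this is the
chain rule, once `exp g` is recognised as the substitution of `g` into the exponential series.
For `H = Σ h_k t^k` it is Newton's identity `(n+1) h_{n+1} = Σ_{a+b=n} p_{a+1} h_b`, compared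
at a monomial `x^d` of degree `n+1`: there the right side counts the pairs `(i, a)` with `a < d_i`,
and there are `Σ_i d_i = n+1` of them. A first-order linear equation over a torsion-free ring
determines all coefficients from the constant one.
-/

open PowerSeries MvPolynomial Finset

/-- The exponential `exp(g) = Σ_{n≥0} g^n/n!` of a formal power series over a `ℚ`-algebra.
For `g` with zero constant term each coefficient is a finite sum: the coefficient of `t^n`
only receives contributions from `g^m` with `m ≤ n`. -/
noncomputable def expPS {A : Type*} [CommRing A] [Algebra ℚ A] (g : PowerSeries A) :
    PowerSeries A :=
  PowerSeries.mk fun n =>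
    ∑ m ∈ Finset.range (n + 1), (m.factorial : ℚ)⁻¹ • PowerSeries.coeff (R := A) n (g ^ m)

namespace MvPolynomial

variable {σ R : Type*} [CommSemiring R] [DecidableEq σ]

theorem prod_map_X_eq_monomial (m : Multiset σ) :
    (m.map (X : σ → MvPolynomial σ R)).prod = monomial (Multiset.toFinsupp m) 1 := by
  induction m using Multiset.induction_on with
  | empty => simp
  | cons a s ih =>
    rw [Multiset.map_cons, Multiset.prod_cons, ih, X, monomial_mul, one_mul,
      ← Multiset.singleton_add, map_add, Multiset.toFinsupp_singleton]

variable [Fintype σ]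

theorem coeff_hsymm (n : ℕ) (d : σ →₀ ℕ) :
    coeff d (hsymm σ R n) = if d.degree = n then 1 else 0 := by
  simp only [hsymm, prod_map_X_eq_monomial, coeff_sum, coeff_monomial]
  split_ifs with hd
  · have hcard : Multiset.card (Finsupp.toMultiset d) = n := by
      rw [Finsupp.card_toMultiset, ← hd]; rfl
    rw [Finset.sum_eq_single_of_mem ⟨_, hcard⟩ (mem_univ _)]
    · simp
    · intro s _ hs
      refine if_neg fun h => hs (Sym.coe_injective ?_)
      simp [← h]
  · refine sum_eq_zero fun s _ => if_neg ?_
    rintro rfl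
    have hcard := Finsupp.card_toMultiset (Multiset.toFinsupp (s : Multiset σ))
    rw [Multiset.toFinsupp_toMultiset] at hcard
    exact hd (hcard.symm.trans s.2)

theorem coeff_X_pow_mul_hsymm (i : σ) (a b : ℕ) (d : σ →₀ ℕ) :
    coeff d (X i ^ a * hsymm σ R b) = if a ≤ d i ∧ d.degree = a + b then 1 else 0 := by
  rw [X_pow_eq_monomial, coeff_monomial_mul', coeff_hsymm]
  simp only [Finsupp.single_le_iff]
  by_cases ha : a ≤ d i
  · have hdeg : d.degree = (d - Finsupp.single i a).degree + a := by
      conv_lhs => rw [← tsub_add_cancel_of_le (Finsupp.single_le_iff.2 ha)]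
      rw [map_add, Finsupp.degree_single]
    simp [ha, hdeg, add_comm a b]
  · simp [ha]

theorem nsmul_hsymm_succ (n : ℕ) :
    (n + 1) • hsymm σ R (n + 1)
      = ∑ ab ∈ antidiagonal n, psum σ R (ab.1 + 1) * hsymm σ R ab.2 := by
  ext d
  rw [← Nat.cast_smul_eq_nsmul R, coeff_smul, coeff_hsymm]
  simp only [coeff_sum, psum, sum_mul, coeff_X_pow_mul_hsymm]
  rw [sum_comm]
  by_cases hd : d.degree = n + 1
  · have hcount (i : σ) : ∑ ab ∈ antidiagonal n,
        (if ab.1 + 1 ≤ d i ∧ d.degree = ab.1 + 1 + ab.2 then (1 : R) else 0) = d i := by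
      have hi : d i ≤ n + 1 := hd ▸ Finsupp.le_degree i d
      rw [Nat.sum_antidiagonal_eq_sum_range_succ_mk, sum_boole]
      congr 1
      conv_rhs => rw [← card_range (d i)]
      congr 1
      ext k
      simp only [mem_filter, mem_range]
      omega
    rw [if_pos hd, sum_congr rfl fun i _ => hcount i, ← Nat.cast_sum, ← Finsupp.degree_eq_sum, hd]
    simp
  · rw [if_neg hd, smul_zero]
    refine (sum_eq_zero fun i _ => sum_eq_zero fun ab hab => if_neg ?_).symm
    rw [HasAntidiagonal.mem_antidiagonal] at hab
    omega

theorem derivative_mk_hsymm :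
    d⁄dX (MvPolynomial σ R) (PowerSeries.mk (hsymm σ R))
      = PowerSeries.mk (fun k => psum σ R (k + 1)) * PowerSeries.mk (hsymm σ R) := by
  ext n
  rw [coeff_derivative, PowerSeries.coeff_mul, coeff_mk, mul_comm, ← Nat.cast_succ, ← nsmul_eq_mul,
    nsmul_hsymm_succ]
  simp only [coeff_mk]

end MvPolynomial

namespace PowerSeries

theorem derivative_mk_inv_smul {A : Type*} [CommRing A] [Algebra ℚ A] (a : ℕ → A) :
    d⁄dX A (mk fun k => if k = 0 then 0 else (k : ℚ)⁻¹ • a k) = mk fun k => a (k + 1) := by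
  ext n
  rw [coeff_derivative, coeff_mk, coeff_mk, if_neg n.succ_ne_zero, mul_comm, ← Nat.cast_succ,
    ← nsmul_eq_mul, ← Nat.cast_smul_eq_nsmul ℚ, smul_smul, mul_inv_cancel₀ (by positivity),
    one_smul]

theorem eq_of_derivative_eq_mul {A : Type*} [CommRing A] [IsAddTorsionFree A] {P F G : A⟦X⟧}
    (hF : d⁄dX A F = P * F) (hG : d⁄dX A G = P * G) (h0 : constantCoeff F = constantCoeff G) :
    F = G := by
  ext n
  induction n using Nat.strong_induction_on with
  | _ n ih =>
    cases n with
    | zero => simpa using h0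
    | succ n =>
      have hF' := congrArg (coeff n) hF
      have hG' := congrArg (coeff n) hG
      rw [coeff_derivative, coeff_mul] at hF' hG'
      have hsum : ∑ ab ∈ antidiagonal n, coeff ab.1 P * coeff ab.2 F
          = ∑ ab ∈ antidiagonal n, coeff ab.1 P * coeff ab.2 G :=
        sum_congr rfl fun ab hab => by
          rw [ih ab.2 (by rw [HasAntidiagonal.mem_antidiagonal] at hab; omega)]
      have h := hF'.trans (hsum.trans hG'.symm)
      rw [mul_comm, ← Nat.cast_succ, ← nsmul_eq_mul, mul_comm, ← nsmul_eq_mul] at h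
      exact (smul_right_inj n.succ_ne_zero).mp h

theorem coeff_pow_eq_zero_of_lt {R : Type*} [CommSemiring R] {g : R⟦X⟧}
    (hg : constantCoeff g = 0) {n m : ℕ} (h : n < m) : coeff n (g ^ m) = 0 :=
  X_pow_dvd_iff.1 (pow_dvd_pow_of_dvd (X_dvd_iff.2 hg) m) n h

variable {A : Type*} [CommRing A] [Algebra ℚ A]

theorem expPS_eq_subst_exp {g : A⟦X⟧} (hg : constantCoeff g = 0) : expPS g = (exp A).subst g := by
  ext n
  rw [coeff_subst' (HasSubst.of_constantCoeff_zero' hg), expPS, coeff_mk,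
    finsum_eq_sum_of_support_subset (s := range (n + 1))]
  · refine sum_congr rfl fun m _ => ?_
    rw [coeff_exp, smul_eq_mul, Algebra.smul_def, one_div]
  · intro m hm
    rw [Function.mem_support] at hm
    rw [coe_range, Set.mem_Iio, Nat.lt_succ_iff]
    by_contra! h
    exact hm (by rw [coeff_pow_eq_zero_of_lt hg h, smul_zero])

theorem derivative_expPS {g : A⟦X⟧} (hg : constantCoeff g = 0) :
    d⁄dX A (expPS g) = d⁄dX A g * expPS g := by
  rw [expPS_eq_subst_exp hg, derivative_subst (HasSubst.of_constantCoeff_zero' hg),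
    derivative_exp, mul_comm]

theorem constantCoeff_expPS (g : A⟦X⟧) : constantCoeff (expPS g) = 1 := by
  rw [← coeff_zero_eq_constantCoeff_apply, expPS, coeff_mk]
  simp

end PowerSeries

/-- Over `MvPolynomial σ ℚ`,
`Σ_{k≥0} h_k t^k = exp( Σ_{k≥1} (1/k) • p_k t^k )`. -/
theorem stmt1 (σ : Type*) [Fintype σ] [DecidableEq σ] :
    (PowerSeries.mk fun k => hsymm σ ℚ k)
      = expPS (PowerSeries.mk fun k =>
          if k = 0 then 0 else ((k : ℚ)⁻¹ : ℚ) • psum σ ℚ k) := by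
  have hg : PowerSeries.constantCoeff
      (PowerSeries.mk fun k => if k = 0 then 0 else ((k : ℚ)⁻¹ : ℚ) • psum σ ℚ k) = 0 := by
    rw [← coeff_zero_eq_constantCoeff_apply, coeff_mk, if_pos rfl]
  refine eq_of_derivative_eq_mul derivative_mk_hsymm ?_ ?_
  · rw [derivative_expPS hg, derivative_mk_inv_smul]
  · rw [constantCoeff_expPS, ← coeff_zero_eq_constantCoeff_apply, coeff_mk, hsymm_zero]
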